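/- Let m > n > 0, c > 0, and let w : [0,∞) → [0,∞) be continuous nondecreasing with w(x) > 0 for x > 0 such that Ψ(x) = ∫_1^x ds/w(s^{1/(m−n)}) satisfies lim_{x→∞} Ψ(x) = ∞. Then under the hypotheses of the previous corollary (Sun's Theorem 2.2 setting), the bound u(t) ≤ [Ψ⁻¹(Ψ(c) + ∫_0^{α(t)} f(s) ds + ∫_0^t g(s) ds)]^{1/(m−n)} holds for all t ∈ [0,∞). -/

import Mathlib

open Set Filter intervalIntegral Topology

/-!
Bihari's argument. With `K = m / (m - n)`, the right-hand side `v t` of the integral inequality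
is a nondecreasing majorant of `u t ^ m`, so `u ≤ v ^ (1/m)` on `[0, t]`. Feeding this back into
the derivative of `v` gives `v' ≤ K (f (α t) α' t + g t) (v ^ (1/m)) ^ n w (v ^ (1/m))`, while
`(Ψ (v ^ (1/K)))' = v' / (K (v ^ (1/m)) ^ n w (v ^ (1/m)))`; hence
`Ψ (v ^ (1/K)) - ∫₀^{α t} f - ∫₀^t g` is antitone, and at `t = 0` it equals `Ψ c`. Since `Ψ` is
strictly increasing and unbounded, it attains the value `Ψ c + ∫₀^{α t} f + ∫₀^t g` at some
`y ≥ v t ^ (1/K)`, and `u t ≤ v t ^ (1/m) = (v t ^ (1/K)) ^ (1/(m-n)) ≤ y ^ (1/(m-n))`.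
-/

section PrimitiveOnIci

variable {F : ℝ → ℝ}

lemma ContinuousOn.continuous_comp_max_zero (hF : ContinuousOn F (Ici 0)) :
    Continuous fun x => F (max x 0) :=
  hF.comp_continuous (continuous_id.max continuous_const) fun x => le_max_right x 0

lemma integral_comp_max_zero {b : ℝ} (hb : 0 ≤ b) :
    ∫ x in (0:ℝ)..b, F (max x 0) = ∫ x in (0:ℝ)..b, F x :=
  integral_congr fun x hx => by
    rw [uIcc_of_le hb] at hx
    rw [max_eq_left hx.1]

lemma ContinuousOn.continuousOn_integral_comp {α : ℝ → ℝ} {s : Set ℝ}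
    (hF : ContinuousOn F (Ici 0)) (hα : ContinuousOn α s) (hα0 : ∀ t ∈ s, 0 ≤ α t) :
    ContinuousOn (fun t => ∫ x in (0:ℝ)..α t, F x) s := by
  have hprim := continuous_primitive (μ := MeasureTheory.volume)
    (fun a b => hF.continuous_comp_max_zero.intervalIntegrable a b) 0
  exact (hprim.comp_continuousOn hα).congr fun t ht => (integral_comp_max_zero (hα0 t ht)).symm

lemma ContinuousOn.hasDerivAt_integral_comp {α : ℝ → ℝ} {a t : ℝ}
    (hF : ContinuousOn F (Ici 0)) (hα : HasDerivAt α a t) (hα0 : ∀ᶠ s in 𝓝 t, 0 ≤ α s) :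
    HasDerivAt (fun s => ∫ x in (0:ℝ)..α s, F x) (F (α t) * a) t := by
  have h := (hF.continuous_comp_max_zero.integral_hasStrictDerivAt 0 (α t)).hasDerivAt.comp t hα
  rw [max_eq_left hα0.self_of_nhds] at h
  exact h.congr_of_eventuallyEq (hα0.mono fun s hs => (integral_comp_max_zero hs).symm)

lemma ContinuousOn.integral_le_integral_of_nonneg {a b : ℝ} (hF : ContinuousOn F (Ici 0))
    (hF0 : ∀ x ≥ 0, 0 ≤ F x) (ha : 0 ≤ a) (hab : a ≤ b) :
    ∫ x in (0:ℝ)..a, F x ≤ ∫ x in (0:ℝ)..b, F x :=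
  integral_mono_interval le_rfl ha hab
    ((MeasureTheory.ae_restrict_mem measurableSet_Ioc).mono fun x hx => hF0 x hx.1.le)
    ((hF.mono (uIcc_of_le (ha.trans hab) ▸ fun _ hx => hx.1)).intervalIntegrable)

end PrimitiveOnIci

lemma nonneg_of_continuousOn_Ici_of_pos {w : ℝ → ℝ} (hw : ContinuousOn w (Ici 0))
    (hw_pos : ∀ x > 0, 0 < w x) {x : ℝ} (hx : 0 ≤ x) : 0 ≤ w x :=
  le_on_closure (f := fun _ => 0) (s := Ioi 0) (fun y hy => (hw_pos y hy).le) continuousOn_const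
    (by rwa [closure_Ioi]) (by rwa [closure_Ioi])

lemma continuousOn_one_div_comp_rpow {w : ℝ → ℝ} (p : ℝ) (hw : ContinuousOn w (Ici 0))
    (hw_pos : ∀ x > 0, 0 < w x) : ContinuousOn (fun s => 1 / w (s ^ p)) (Ioi 0) := by
  refine continuousOn_const.div (hw.comp (continuousOn_id.rpow_const fun _ hs => Or.inl
    (ne_of_gt hs)) fun s hs => (Real.rpow_pos_of_pos hs p).le) fun s hs => ?_
  exact (hw_pos _ (Real.rpow_pos_of_pos hs p)).ne'

lemma hasDerivAt_integral_of_continuousOn_Ioi {Φ : ℝ → ℝ} (hΦ : ContinuousOn Φ (Ioi 0))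
    {a x : ℝ} (ha : 0 < a) (hx : 0 < x) :
    HasDerivAt (fun x => ∫ s in a..x, Φ s) (Φ x) x :=
  integral_hasDerivAt_right
    ((hΦ.mono fun _ hs => (lt_min ha hx).trans_le hs.1).intervalIntegrable)
    (hΦ.stronglyMeasurableAtFilter isOpen_Ioi x hx) (hΦ.continuousAt (Ioi_mem_nhds hx))

lemma strictMonoOn_Ioi_of_hasDerivAt_pos {Ψ Φ : ℝ → ℝ} (hΨ : ∀ x > 0, HasDerivAt Ψ (Φ x) x)
    (hΦ : ∀ x > 0, 0 < Φ x) : StrictMonoOn Ψ (Ioi 0) :=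
  strictMonoOn_of_hasDerivWithinAt_pos (convex_Ioi 0)
    (fun x hx => (hΨ x hx).continuousAt.continuousWithinAt)
    (fun x hx => (hΨ x (interior_subset hx)).hasDerivWithinAt)
    (fun x hx => hΦ x (interior_subset hx))

lemma rpow_div_rpow_one_div_sub {x m n : ℝ} (hx : 0 ≤ x) (hm : m ≠ 0) (hmn : m - n ≠ 0) :
    (x ^ ((m - n) / m)) ^ (1 / (m - n)) = x ^ m⁻¹ := by
  rw [← Real.rpow_mul hx]
  congr 1
  field_simp

theorem antitoneOn_comp_rpow_sub {m n : ℝ} {w Ψ v v' H h : ℝ → ℝ} (hm : 0 < m) (hnm : n < m)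
    (hΨ : ∀ x > 0, HasDerivAt Ψ (1 / w (x ^ (1 / (m - n)))) x) (hw_pos : ∀ x > 0, 0 < w x)
    (hv_cont : ContinuousOn v (Ici 0)) (hv_pos : ∀ t ≥ 0, 0 < v t)
    (hv : ∀ t > 0, HasDerivAt v (v' t) t)
    (hH_cont : ContinuousOn H (Ici 0)) (hH : ∀ t > 0, HasDerivAt H (h t) t)
    (hv'_le : ∀ t > 0,
      v' t ≤ m / (m - n) * (h t * ((v t ^ m⁻¹) ^ n * w (v t ^ m⁻¹)))) :
    AntitoneOn (fun t => Ψ (v t ^ ((m - n) / m)) - H t) (Ici 0) := by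
  have hq : 0 < (m - n) / m := div_pos (sub_pos.2 hnm) hm
  refine antitoneOn_of_hasDerivWithinAt_nonpos (convex_Ici 0) (f' := fun t =>
      1 / w ((v t ^ ((m - n) / m)) ^ (1 / (m - n))) *
        (v' t * ((m - n) / m) * v t ^ ((m - n) / m - 1)) - h t)
    ?_ (fun t ht => ?_) fun t ht => ?_
  · refine ContinuousOn.sub (fun t ht => ?_) hH_cont
    have hΨt := hΨ _ (Real.rpow_pos_of_pos (hv_pos t ht) ((m - n) / m))
    exact hΨt.continuousAt.comp_continuousWithinAt (f := fun t => v t ^ ((m - n) / m))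
      ((hv_cont t ht).rpow_const (Or.inr hq.le))
  · rw [interior_Ici] at ht
    exact (((hΨ _ (Real.rpow_pos_of_pos (hv_pos t ht.le) ((m - n) / m))).comp t
      ((hv t ht).rpow_const (Or.inl (hv_pos t ht.le).ne'))).sub (hH t ht)).hasDerivWithinAt
  · rw [interior_Ici] at ht
    have hvt := hv_pos t ht.le
    set R := v t ^ m⁻¹
    have hR : 0 < R := Real.rpow_pos_of_pos hvt _
    have hW : 0 < R ^ n * w R := mul_pos (Real.rpow_pos_of_pos hR n) (hw_pos R hR)
    have hz : (v t ^ ((m - n) / m)) ^ (1 / (m - n)) = R :=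
      rpow_div_rpow_one_div_sub hvt.le hm.ne' (sub_pos.2 hnm).ne'
    have hpow : v t ^ ((m - n) / m - 1) = (R ^ n)⁻¹ := by
      rw [← Real.rpow_mul hvt.le, ← Real.rpow_neg hvt.le]
      congr 1
      field_simp
      ring
    rw [sub_nonpos, hz, hpow]
    calc 1 / w R * (v' t * ((m - n) / m) * (R ^ n)⁻¹)
        = (m - n) / m * v' t / (R ^ n * w R) := by field_simp
      _ ≤ (m - n) / m * (m / (m - n) * (h t * (R ^ n * w R))) / (R ^ n * w R) := by
        gcongr
        exact hv'_le t ht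
      _ = h t := by field_simp [(sub_pos.2 hnm).ne', (hw_pos R hR).ne']

lemma mul_rpow_mul_le_mul {w : ℝ → ℝ} {a x R n : ℝ} (hw : MonotoneOn w (Ici 0)) (hw0 : 0 ≤ w x)
    (ha : 0 ≤ a) (hx : 0 ≤ x) (hn : 0 ≤ n) (hxR : x ≤ R) :
    a * x ^ n * w x ≤ a * (R ^ n * w R) := by
  rw [mul_assoc]
  exact mul_le_mul_of_nonneg_left (mul_le_mul (Real.rpow_le_rpow hx hxR hn)
    (hw hx (hx.trans hxR) hxR) hw0 (Real.rpow_nonneg (hx.trans hxR) n)) ha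

noncomputable def integralMajorant (C K : ℝ) (α F G : ℝ → ℝ) (t : ℝ) : ℝ :=
  C + K * ((∫ s in (0:ℝ)..α t, F s) + ∫ s in (0:ℝ)..t, G s)

section IntegralMajorant

variable {C K : ℝ} {α F G : ℝ → ℝ}

lemma integralMajorant_zero (hα0 : α 0 = 0) : integralMajorant C K α F G 0 = C := by
  simp [integralMajorant, hα0]

lemma monotoneOn_integralMajorant (hK : 0 ≤ K) (hα_mono : MonotoneOn α (Ici 0))
    (hα_nonneg : ∀ t ≥ 0, 0 ≤ α t) (hF : ContinuousOn F (Ici 0)) (hF0 : ∀ x ≥ 0, 0 ≤ F x)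
    (hG : ContinuousOn G (Ici 0)) (hG0 : ∀ x ≥ 0, 0 ≤ G x) :
    MonotoneOn (integralMajorant C K α F G) (Ici 0) := fun s hs t ht hst => by
  unfold integralMajorant
  gcongr
  · exact hF.integral_le_integral_of_nonneg hF0 (hα_nonneg s hs) (hα_mono hs ht hst)
  · exact hG.integral_le_integral_of_nonneg hG0 hs hst

lemma continuousOn_integralMajorant (hα : ContinuousOn α (Ici 0))
    (hα_nonneg : ∀ t ≥ 0, 0 ≤ α t) (hF : ContinuousOn F (Ici 0)) (hG : ContinuousOn G (Ici 0)) :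
    ContinuousOn (integralMajorant C K α F G) (Ici 0) :=
  continuousOn_const.add (continuousOn_const.mul
    ((hF.continuousOn_integral_comp hα hα_nonneg).add
      (hG.continuousOn_integral_comp continuousOn_id fun _ ht => ht)))

lemma hasDerivAt_integralMajorant {a t : ℝ} (ht : 0 < t) (hα : HasDerivAt α a t)
    (hα_nonneg : ∀ᶠ s in 𝓝 t, 0 ≤ α s) (hF : ContinuousOn F (Ici 0))
    (hG : ContinuousOn G (Ici 0)) :
    HasDerivAt (integralMajorant C K α F G) (K * (F (α t) * a + G t)) t := by
  have hG' := hG.hasDerivAt_integral_comp (hasDerivAt_id t)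
    ((lt_mem_nhds ht).mono fun _ hs => hs.le)
  rw [id, mul_one] at hG'
  exact (((hF.hasDerivAt_integral_comp hα hα_nonneg).add hG').const_mul K).const_add C

end IntegralMajorant

lemma continuousOn_mul_rpow_mul_comp {f u w : ℝ → ℝ} {n : ℝ} (hn : 0 ≤ n)
    (hf : ContinuousOn f (Ici 0)) (hu : ContinuousOn u (Ici 0)) (hu0 : ∀ t ≥ 0, 0 ≤ u t)
    (hw : ContinuousOn w (Ici 0)) :
    ContinuousOn (fun s => f s * u s ^ n * w (u s)) (Ici 0) :=
  (hf.fun_mul (hu.rpow_const fun _ _ => Or.inr hn)).fun_mul (hw.comp hu hu0)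

theorem antitoneOn_comp_integralMajorant {m n C : ℝ} {u α f g w Ψ : ℝ → ℝ} (hn : 0 ≤ n)
    (hnm : n < m) (hu_cont : ContinuousOn u (Ici 0)) (hu_nonneg : ∀ t ≥ 0, 0 ≤ u t)
    (hα_diff : DifferentiableOn ℝ α (Ici 0)) (hα_mono : MonotoneOn α (Ici 0))
    (hα_nonneg : ∀ t ≥ 0, 0 ≤ α t) (hα_le : ∀ t ≥ 0, α t ≤ t)
    (hf_cont : ContinuousOn f (Ici 0)) (hf_nonneg : ∀ s ≥ 0, 0 ≤ f s)
    (hg_cont : ContinuousOn g (Ici 0)) (hg_nonneg : ∀ s ≥ 0, 0 ≤ g s)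
    (hw_cont : ContinuousOn w (Ici 0)) (hw_mono : MonotoneOn w (Ici 0))
    (hw_pos : ∀ x > 0, 0 < w x) (hΨ : ∀ x > 0, HasDerivAt Ψ (1 / w (x ^ (1 / (m - n)))) x)
    (hv_pos : ∀ t ≥ 0, 0 < integralMajorant C (m / (m - n)) α
      (fun s => f s * u s ^ n * w (u s)) (fun s => g s * u s ^ n * w (u s)) t)
    (hu_le : ∀ s ≥ 0, ∀ t ≥ s, u s ≤ integralMajorant C (m / (m - n)) α
      (fun s => f s * u s ^ n * w (u s)) (fun s => g s * u s ^ n * w (u s)) t ^ m⁻¹) :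
    AntitoneOn (fun t => Ψ (integralMajorant C (m / (m - n)) α
      (fun s => f s * u s ^ n * w (u s)) (fun s => g s * u s ^ n * w (u s)) t ^ ((m - n) / m)) -
        integralMajorant 0 1 α f g t) (Ici 0) := by
  have hα_deriv : ∀ t > 0, HasDerivAt α (deriv α t) t := fun t ht =>
    ((hα_diff t ht.le).differentiableAt (Ici_mem_nhds ht)).hasDerivAt
  have hα_ev : ∀ t > 0, ∀ᶠ s in 𝓝 t, 0 ≤ α s := fun t ht =>
    Filter.mem_of_superset (Ici_mem_nhds ht) fun s hs => hα_nonneg s hs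
  have hw0 : ∀ x ≥ 0, 0 ≤ w x := fun x hx => nonneg_of_continuousOn_Ici_of_pos hw_cont hw_pos hx
  have hF := continuousOn_mul_rpow_mul_comp hn hf_cont hu_cont hu_nonneg hw_cont
  have hG := continuousOn_mul_rpow_mul_comp hn hg_cont hu_cont hu_nonneg hw_cont
  refine antitoneOn_comp_rpow_sub (hn.trans_lt hnm) hnm hΨ hw_pos
    (continuousOn_integralMajorant hα_diff.continuousOn hα_nonneg hF hG) hv_pos
    (fun t ht => hasDerivAt_integralMajorant ht (hα_deriv t ht) (hα_ev t ht) hF hG)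
    (continuousOn_integralMajorant hα_diff.continuousOn hα_nonneg hf_cont hg_cont)
    (fun t ht => hasDerivAt_integralMajorant ht (hα_deriv t ht) (hα_ev t ht) hf_cont hg_cont)
    fun t ht => ?_
  set R := integralMajorant C (m / (m - n)) α
    (fun s => f s * u s ^ n * w (u s)) (fun s => g s * u s ^ n * w (u s)) t ^ m⁻¹
  have hα_t := hα_nonneg t ht.le
  have hFR : f (α t) * u (α t) ^ n * w (u (α t)) ≤ f (α t) * (R ^ n * w R) :=
    mul_rpow_mul_le_mul hw_mono (hw0 _ (hu_nonneg _ hα_t)) (hf_nonneg _ hα_t) (hu_nonneg _ hα_t)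
      hn (hu_le _ hα_t t (hα_le t ht.le))
  have hGR : g t * u t ^ n * w (u t) ≤ g t * (R ^ n * w R) :=
    mul_rpow_mul_le_mul hw_mono (hw0 _ (hu_nonneg _ ht.le)) (hg_nonneg _ ht.le)
      (hu_nonneg _ ht.le) hn (hu_le _ ht.le t le_rfl)
  have hα' : 0 ≤ deriv α t :=
    hα_mono.derivWithin_nonneg.trans_eq (derivWithin_of_mem_nhds (Ici_mem_nhds ht))
  have hK : 0 ≤ m / (m - n) := (div_pos (hn.trans_lt hnm) (sub_pos.2 hnm)).le
  calc m / (m - n) * (f (α t) * u (α t) ^ n * w (u (α t)) * deriv α t + g t * u t ^ n * w (u t))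
      ≤ m / (m - n) * (f (α t) * (R ^ n * w R) * deriv α t + g t * (R ^ n * w R)) := by
        gcongr
    _ = m / (m - n) * (1 * (f (α t) * deriv α t + g t) * (R ^ n * w R)) := by ring

theorem exists_bihari_bound {m n c : ℝ} {u α f g w Ψ : ℝ → ℝ} (hn : 0 ≤ n) (hnm : n < m)
    (hc : 0 < c) (hu_cont : ContinuousOn u (Ici 0)) (hu_nonneg : ∀ t ≥ 0, 0 ≤ u t)
    (hα_diff : DifferentiableOn ℝ α (Ici 0)) (hα_mono : MonotoneOn α (Ici 0))
    (hα_nonneg : ∀ t ≥ 0, 0 ≤ α t) (hα_le : ∀ t ≥ 0, α t ≤ t)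
    (hf_cont : ContinuousOn f (Ici 0)) (hf_nonneg : ∀ s ≥ 0, 0 ≤ f s)
    (hg_cont : ContinuousOn g (Ici 0)) (hg_nonneg : ∀ s ≥ 0, 0 ≤ g s)
    (hw_cont : ContinuousOn w (Ici 0)) (hw_mono : MonotoneOn w (Ici 0))
    (hw_pos : ∀ x > 0, 0 < w x) (hΨ : ∀ x > 0, HasDerivAt Ψ (1 / w (x ^ (1 / (m - n)))) x)
    (hmain : ∀ t ≥ 0, u t ^ m ≤ integralMajorant (c ^ (m / (m - n))) (m / (m - n)) α
      (fun s => f s * u s ^ n * w (u s)) (fun s => g s * u s ^ n * w (u s)) t)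
    {t : ℝ} (ht : 0 ≤ t) :
    ∃ z ≥ c, Ψ z ≤ Ψ c + (∫ s in (0:ℝ)..α t, f s) + (∫ s in (0:ℝ)..t, g s) ∧
      u t ≤ z ^ (1 / (m - n)) := by
  have hm : 0 < m := hn.trans_lt hnm
  have hα0 : α 0 = 0 := le_antisymm (hα_le 0 le_rfl) (hα_nonneg 0 le_rfl)
  have hw0 : ∀ x ≥ 0, 0 ≤ w x := fun x hx => nonneg_of_continuousOn_Ici_of_pos hw_cont hw_pos hx
  have hwu0 : ∀ s ≥ 0, 0 ≤ u s ^ n * w (u s) := fun s hs =>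
    mul_nonneg (Real.rpow_nonneg (hu_nonneg s hs) n) (hw0 _ (hu_nonneg s hs))
  set v := integralMajorant (c ^ (m / (m - n))) (m / (m - n)) α
    (fun s => f s * u s ^ n * w (u s)) (fun s => g s * u s ^ n * w (u s))
  have hv_mono : MonotoneOn v (Ici 0) :=
    monotoneOn_integralMajorant (div_pos hm (sub_pos.2 hnm)).le hα_mono hα_nonneg
      (continuousOn_mul_rpow_mul_comp hn hf_cont hu_cont hu_nonneg hw_cont)
      (fun s hs => mul_assoc (f s) _ _ ▸ mul_nonneg (hf_nonneg s hs) (hwu0 s hs))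
      (continuousOn_mul_rpow_mul_comp hn hg_cont hu_cont hu_nonneg hw_cont)
      (fun s hs => mul_assoc (g s) _ _ ▸ mul_nonneg (hg_nonneg s hs) (hwu0 s hs))
  have hv0 : v 0 = c ^ (m / (m - n)) := integralMajorant_zero hα0
  have hv_pos : ∀ t ≥ 0, 0 < v t := fun t ht =>
    (Real.rpow_pos_of_pos hc _).trans_le (hv0 ▸ hv_mono self_mem_Ici ht ht)
  have hu_le : ∀ s ≥ 0, ∀ t ≥ s, u s ≤ v t ^ m⁻¹ := fun s hs t hst =>
    (Real.le_rpow_inv_iff_of_pos (hu_nonneg s hs) (hv_pos t (hs.trans hst)).le hm).2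
      ((hmain s hs).trans (hv_mono hs (hs.trans hst) hst))
  have hz0 : v 0 ^ ((m - n) / m) = c := by
    rw [hv0, ← Real.rpow_mul hc.le, div_mul_div_cancel₀', div_self (sub_pos.2 hnm).ne',
      Real.rpow_one]
    exact hm.ne'
  refine ⟨v t ^ ((m - n) / m), ?_, ?_, ?_⟩
  · exact hz0 ▸ Real.rpow_le_rpow (hv_pos 0 le_rfl).le (hv_mono self_mem_Ici ht ht)
      (div_pos (sub_pos.2 hnm) hm).le
  · have h : Ψ (v t ^ ((m - n) / m)) - integralMajorant 0 1 α f g t ≤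
        Ψ (v 0 ^ ((m - n) / m)) - integralMajorant 0 1 α f g 0 :=
      antitoneOn_comp_integralMajorant hn hnm hu_cont hu_nonneg hα_diff hα_mono hα_nonneg
        hα_le hf_cont hf_nonneg hg_cont hg_nonneg hw_cont hw_mono hw_pos hΨ hv_pos hu_le
        self_mem_Ici ht ht
    rw [hz0, integralMajorant_zero hα0] at h
    simp only [integralMajorant, zero_add, one_mul] at h
    linarith
  · rw [rpow_div_rpow_one_div_sub (hv_pos t ht).le hm.ne' (sub_pos.2 hnm).ne']
    exact hu_le t ht t le_rfl

/-- Remark after Sun's Theorem 2.2: if `Ψ(x) → ∞` as `x → ∞`, then the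
estimate `u t ≤ [Ψ⁻¹(Ψ(c) + ∫₀^{α t} f + ∫₀^t g)]^{1/(m-n)}` holds for all
`t ≥ 0` (expressed via the witness `y = Ψ⁻¹(…)`). -/
theorem sun_thm22_global (m n c : ℝ) (hmn : n < m) (hn : 0 < n) (hc : 0 < c)
    (u α f g w Ψ : ℝ → ℝ)
    (hu_cont : ContinuousOn u (Ici 0)) (hu_nonneg : ∀ t ≥ (0:ℝ), 0 ≤ u t)
    (hα_C1 : ContDiffOn ℝ 1 α (Ici 0)) (hα_mono : MonotoneOn α (Ici 0))
    (hα_nonneg : ∀ t ≥ (0:ℝ), 0 ≤ α t) (hα_le : ∀ t ≥ (0:ℝ), α t ≤ t)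
    (hf_cont : ContinuousOn f (Ici 0)) (hf_nonneg : ∀ s ≥ (0:ℝ), 0 ≤ f s)
    (hg_cont : ContinuousOn g (Ici 0)) (hg_nonneg : ∀ s ≥ (0:ℝ), 0 ≤ g s)
    (hw_cont : ContinuousOn w (Ici 0)) (hw_mono : MonotoneOn w (Ici 0))
    (hw_pos : ∀ x > (0:ℝ), 0 < w x)
    (hΨ : ∀ x, Ψ x = ∫ s in (1:ℝ)..x, 1 / w (s ^ (1 / (m - n))))
    (hΨ_div : Tendsto Ψ atTop atTop)
    (hmain : ∀ t ≥ (0:ℝ),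
      u t ^ m ≤ c ^ (m / (m - n)) + (m / (m - n)) *
        ((∫ s in (0:ℝ)..(α t), f s * u s ^ n * w (u s)) +
          ∫ s in (0:ℝ)..t, g s * u s ^ n * w (u s))) :
    ∀ t ≥ (0:ℝ),
      ∃ y > (0:ℝ),
        Ψ y = Ψ c + (∫ s in (0:ℝ)..(α t), f s) + (∫ s in (0:ℝ)..t, g s) ∧
        u t ≤ y ^ (1 / (m - n)) := by
  intro t ht
  have hΨ' : ∀ x > 0, HasDerivAt Ψ (1 / w (x ^ (1 / (m - n)))) x := fun x hx =>
    funext hΨ ▸ hasDerivAt_integral_of_continuousOn_Ioi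
      (continuousOn_one_div_comp_rpow _ hw_cont hw_pos) one_pos hx
  have hΨ_mono : StrictMonoOn Ψ (Ioi 0) := strictMonoOn_Ioi_of_hasDerivAt_pos hΨ' fun x hx =>
    one_div_pos.2 (hw_pos _ (Real.rpow_pos_of_pos hx _))
  obtain ⟨z, hcz, hΨz, huz⟩ := exists_bihari_bound hn.le hmn hc hu_cont hu_nonneg
    (hα_C1.differentiableOn one_ne_zero) hα_mono hα_nonneg hα_le hf_cont hf_nonneg hg_cont
    hg_nonneg hw_cont hw_mono hw_pos hΨ' hmain ht
  obtain ⟨y, hcy, hy⟩ := intermediate_value_Ici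
    (fun x hx => (hΨ' x (hc.trans_le hx)).continuousAt.continuousWithinAt) hΨ_div
    ((hΨ_mono.monotoneOn hc (hc.trans_le hcz) hcz).trans hΨz)
  have hzy : z ≤ y := (hΨ_mono.le_iff_le (hc.trans_le hcz) (hc.trans_le hcy)).1 (hy ▸ hΨz)
  refine ⟨y, hc.trans_le hcy, hy, huz.trans ?_⟩
  exact Real.rpow_le_rpow (hc.trans_le hcz).le hzy (one_div_pos.2 (sub_pos.2 hmn)).le
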